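/- arXiv:2211.15010 — 2 statements merged into one kernel-verified Lean document; each statement's English description precedes it below -/
import Mathlib

section
/- The element Λ = (∑_{i=0}^{4p−1} K^i)·X^{p−1} is a left cointegral of the Borel Hopf algebra H_p: for every x ∈ B one has x·Λ = ε(x)·Λ. -/
/-!
# A left cointegral for the BorelHp part of restricted quantum sl₂

Let `p ≥ 2`, `ζ = exp(πi/p)` a primitive `2p`-th root of unity, and let `B` be the quotient
of the free `ℂ`-algebra on two generators `K`, `X` by the two-sided ideal generated by
`K·X − ζ·X·K`, `K^(4p) − 1` and `X^p` (the underlying algebra of the BorelHp part `H_p` of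
restricted quantum `sl₂`).  Then `Λ = (∑_{i=0}^{4p−1} K^i)·X^(p−1)` is a left cointegral:
`x·Λ = ε(x)·Λ` for every `x ∈ B`, where `ε` is the counit (`ε(K) = 1`, `ε(X) = 0`).
-/

noncomputable section

/-- The relations defining the BorelHp part `H_p`:  `K·X = ζ·X·K`, `K^(4p) = 1`, `X^p = 0`,
where `ζ = exp(π·I/p)`, the generator `K` is `FreeAlgebra.ι ℂ false` and the generator `X`
is `FreeAlgebra.ι ℂ true`. -/
inductive BorelRel (p : ℕ) : FreeAlgebra ℂ Bool → FreeAlgebra ℂ Bool → Prop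
  | commKX : BorelRel p (FreeAlgebra.ι ℂ false * FreeAlgebra.ι ℂ true)
      (Complex.exp (Real.pi * Complex.I / p) • (FreeAlgebra.ι ℂ true * FreeAlgebra.ι ℂ false))
  | Kpow : BorelRel p ((FreeAlgebra.ι ℂ false) ^ (4 * p)) 1
  | Xpow : BorelRel p ((FreeAlgebra.ι ℂ true) ^ p) 0

/-- The underlying algebra `B` of the BorelHp part `H_p` of restricted quantum `sl₂` at the
`2p`-th root of unity `ζ = exp(πi/p)`. -/
abbrev BorelHp (p : ℕ) : Type := RingQuot (BorelRel p)

/-- The image of the generator `K` in `B`. -/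
def Kgen (p : ℕ) : BorelHp p := RingQuot.mkAlgHom ℂ (BorelRel p) (FreeAlgebra.ι ℂ false)

/-- The image of the generator `X` in `B`. -/
def Xgen (p : ℕ) : BorelHp p := RingQuot.mkAlgHom ℂ (BorelRel p) (FreeAlgebra.ι ℂ true)

lemma Kgen_pow (p : ℕ) : Kgen p ^ (4 * p) = 1 := by
  have := RingQuot.mkAlgHom_rel ℂ (BorelRel.Kpow (p := p))
  simpa [Kgen, map_pow] using this

lemma Xgen_pow (p : ℕ) : Xgen p ^ p = 0 := by
  have := RingQuot.mkAlgHom_rel ℂ (BorelRel.Xpow (p := p))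
  simpa [Xgen, map_pow] using this

lemma KX_comm (p : ℕ) : Kgen p * Xgen p
    = Complex.exp (Real.pi * Complex.I / p) • (Xgen p * Kgen p) := by
  have := RingQuot.mkAlgHom_rel ℂ (BorelRel.commKX (p := p))
  simpa [Kgen, Xgen, map_mul] using this

lemma XK_comm (p : ℕ) : Xgen p * Kgen p
    = (Complex.exp (Real.pi * Complex.I / p))⁻¹ • (Kgen p * Xgen p) := by
  rw [KX_comm, smul_smul, inv_mul_cancel₀ (Complex.exp_ne_zero _), one_smul]

lemma XKpow_comm (p i : ℕ) : Xgen p * Kgen p ^ i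
    = ((Complex.exp (Real.pi * Complex.I / p))⁻¹ ^ i) • (Kgen p ^ i * Xgen p) := by
  induction i with
  | zero => simp
  | succ n ih =>
      rw [pow_succ, ← mul_assoc, ih, smul_mul_assoc, mul_assoc, XK_comm, mul_smul_comm,
        smul_smul, ← pow_succ, ← mul_assoc, ← pow_succ]


/-- `Λ = (∑_{i=0}^{4p−1} K^i)·X^(p−1)` is a left cointegral of the Borel
Hopf algebra `H_p`: for every `x ∈ B` one has `x·Λ = ε(x)·Λ`. -/
theorem borel_left_cointegral (p : ℕ) (hp : 2 ≤ p)
    (ε : BorelHp p →ₐ[ℂ] ℂ) (hK : ε (Kgen p) = 1) (hX : ε (Xgen p) = 0) :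
    ∀ x : BorelHp p,
      x * ((∑ i ∈ Finset.range (4 * p), (Kgen p) ^ i) * (Xgen p) ^ (p - 1))
        = ε x • ((∑ i ∈ Finset.range (4 * p), (Kgen p) ^ i) * (Xgen p) ^ (p - 1)) := by
  set S : BorelHp p := ∑ i ∈ Finset.range (4 * p), (Kgen p) ^ i with hS
  set Λ : BorelHp p := S * (Xgen p) ^ (p - 1) with hΛ
  have hKS : Kgen p * S = S := by
    have h1 : ∑ i ∈ Finset.range (4 * p + 1), Kgen p ^ i = Kgen p * S + 1 := geom_sum_succ
    have h2 : ∑ i ∈ Finset.range (4 * p + 1), Kgen p ^ i = Kgen p ^ (4 * p) + S :=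
      geom_sum_succ'
    rw [h1, Kgen_pow] at h2
    rw [add_comm (1 : BorelHp p) S] at h2
    exact add_right_cancel h2
  have hKΛ : Kgen p * Λ = Λ := by rw [hΛ, ← mul_assoc, hKS]
  have hXΛ : Xgen p * Λ = 0 := by
    rw [hΛ, ← mul_assoc, hS, Finset.mul_sum, Finset.sum_mul]
    apply Finset.sum_eq_zero
    intro i _
    rw [XKpow_comm, smul_mul_assoc, mul_assoc, ← pow_succ',
      Nat.sub_add_cancel (by omega : 1 ≤ p), Xgen_pow, mul_zero, smul_zero]
  intro x
  obtain ⟨y, rfl⟩ := RingQuot.mkAlgHom_surjective ℂ (BorelRel p) x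
  induction y using FreeAlgebra.induction with
  | grade0 r =>
      rw [AlgHom.commutes, AlgHom.commutes, ← Algebra.smul_def]
      simp
  | grade1 b =>
      cases b with
      | false =>
          show Kgen p * Λ = ε (Kgen p) • Λ
          rw [hKΛ, hK, one_smul]
      | true =>
          show Xgen p * Λ = ε (Xgen p) • Λ
          rw [hXΛ, hX, zero_smul]
  | mul a b ha hb =>
      rw [map_mul, map_mul, mul_assoc, hb, mul_smul_comm, ha, smul_smul, mul_comm]
  | add a b ha hb =>
      rw [map_add, map_add, add_mul, ha, hb, add_smul]
end
end

section
/- The operator H_{α,β} acts diagonally on the tensor product of Verma modules with the stated eigenvalue: for every integer p ≥ 2, all α, β ∈ ℂ and all integers a, b, one has ∑_{i=0}^{4p−1} ∑_{j=0}^{4p−1} exp( (πI/p) · ( −(α+j)(β+i)/2 + (i+β)(α/2 − a) + (j+α)(β/2 − b) ) ) = 4p · exp( (πI/(2p)) · (α−2a)(β−2b) ). -/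
/-!
Expanding the exponent, the `(i, j)` summand is `E · ω ^ ((i + 2b)(j + 2a))`, where `E` is the
exponential on the right-hand side and `ω = exp(-2πI/4p)` is a primitive `4p`-th root of unity.
Summing over `j` gives `4p · ω ^ (2a(i + 2b))` if `4p ∣ i + 2b`, which makes that power `1`,
and `0` otherwise; exactly one `i < 4p` satisfies this divisibility.
-/

open Finset

theorem sum_range_ite_dvd_add {M : Type*} [AddCommMonoid M] {n : ℕ} (hn : n ≠ 0) (u : ℤ)
    (c : M) : ∑ i ∈ range n, (if (n : ℤ) ∣ i + u then c else 0) = c := by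
  have hn' : (0 : ℤ) < n := by omega
  have hdvd_iff : ∀ i ∈ range n, (n : ℤ) ∣ i + u ↔ i = ((-u) % n).toNat := by
    intro i hi
    have hi' : (i : ℤ) < n := by simpa using hi
    rw [← Int.ofNat_inj, Int.toNat_of_nonneg (Int.emod_nonneg _ hn'.ne'), ← sub_neg_eq_add,
      ← Int.modEq_iff_dvd, Int.ModEq, Int.emod_eq_of_lt (Int.natCast_nonneg i) hi', eq_comm]
  rw [sum_congr rfl fun i hi => if_congr (hdvd_iff i hi) rfl rfl, sum_ite_eq', if_pos]
  rw [mem_range]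
  have := Int.emod_lt_of_pos (-u) hn'
  omega

namespace IsPrimitiveRoot

variable {K : Type*} [Field K] {ζ : K} {n : ℕ}

theorem geom_sum_zpow (hζ : IsPrimitiveRoot ζ n) (m : ℤ) :
    ∑ j ∈ range n, (ζ ^ m) ^ j = if (n : ℤ) ∣ m then (n : K) else 0 := by
  split_ifs with hdvd
  · simp [(hζ.zpow_eq_one_iff_dvd m).mpr hdvd]
  · have hpow : (ζ ^ m) ^ n = 1 := by
      rw [← zpow_natCast, ← zpow_mul, mul_comm, zpow_mul, zpow_natCast, hζ.pow_eq_one,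
        one_zpow]
    rw [geom_sum_eq (mt (hζ.zpow_eq_one_iff_dvd m).mp hdvd), hpow, sub_self, zero_div]

theorem sum_sum_zpow_mul (hζ : IsPrimitiveRoot ζ n) (u v : ℤ) :
    ∑ i ∈ range n, ∑ j ∈ range n, ζ ^ ((i + u) * (j + v)) = n := by
  rcases eq_or_ne n 0 with rfl | hn
  · simp
  have hζ0 : ζ ≠ 0 := hζ.ne_zero hn
  have hrow : ∀ i : ℕ, ∑ j ∈ range n, ζ ^ ((i + u) * (j + v))
      = if (n : ℤ) ∣ i + u then (n : K) else 0 := by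
    intro i
    have hsplit : ∀ j : ℕ,
        ζ ^ ((i + u) * (j + v)) = ζ ^ ((i + u) * v) * (ζ ^ (i + u)) ^ j := by
      intro j
      rw [← zpow_natCast, ← zpow_mul, ← zpow_add₀ hζ0]
      ring_nf
    simp_rw [hsplit, ← mul_sum, hζ.geom_sum_zpow]
    split_ifs with hdvd
    · rw [(hζ.zpow_eq_one_iff_dvd _).mpr (dvd_mul_of_dvd_left hdvd v), one_mul]
    · rw [mul_zero]
  simp_rw [hrow]
  exact sum_range_ite_dvd_add hn u _

end IsPrimitiveRoot

theorem cartan_summand_eq (p : ℕ) (hp : p ≠ 0) (α β : ℂ) (a b : ℤ) (i j : ℕ) :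
    Complex.exp ((Real.pi * Complex.I / p) *
          (-((α + (j : ℂ)) * (β + (i : ℂ))) / 2 + ((i : ℂ) + β) * (α / 2 - (a : ℂ))
            + ((j : ℂ) + α) * (β / 2 - (b : ℂ))))
      = Complex.exp ((Real.pi * Complex.I / (2 * p)) *
            ((α - 2 * (a : ℂ)) * (β - 2 * (b : ℂ)))) *
          (Complex.exp (2 * Real.pi * Complex.I / (4 * p : ℕ)))⁻¹ ^
            ((i + 2 * b) * (j + 2 * a)) := by
  rw [← Complex.exp_neg, ← Complex.exp_int_mul, ← Complex.exp_add]
  congr 1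
  push_cast
  field_simp
  ring

theorem cartan_diagonal_action_general (p : ℕ) (α β : ℂ) (a b : ℤ) :
    ∑ i ∈ Finset.range (4 * p), ∑ j ∈ Finset.range (4 * p),
        Complex.exp ((Real.pi * Complex.I / p) *
          (-((α + (j : ℂ)) * (β + (i : ℂ))) / 2 + ((i : ℂ) + β) * (α / 2 - (a : ℂ))
            + ((j : ℂ) + α) * (β / 2 - (b : ℂ))))
      = (4 * p : ℂ) *
          Complex.exp ((Real.pi * Complex.I / (2 * p)) *
            ((α - 2 * (a : ℂ)) * (β - 2 * (b : ℂ)))) := by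
  rcases eq_or_ne p 0 with rfl | hp
  · simp
  have hω := (Complex.isPrimitiveRoot_exp (4 * p) (by positivity)).inv
  simp_rw [cartan_summand_eq p hp, ← mul_sum, hω.sum_sum_zpow_mul]
  push_cast
  ring

/-- For every integer `p ≥ 2`, all `α, β ∈ ℂ` and all integers `a, b`:
`∑_{i=0}^{4p−1} ∑_{j=0}^{4p−1}
   exp((πI/p)·(−(α+j)(β+i)/2 + (i+β)(α/2 − a) + (j+α)(β/2 − b)))
 = 4p · exp((πI/(2p))·(α−2a)(β−2b))`. -/
theorem cartan_diagonal_action (p : ℕ) (hp : 2 ≤ p) (α β : ℂ) (a b : ℤ) :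
    ∑ i ∈ Finset.range (4 * p), ∑ j ∈ Finset.range (4 * p),
        Complex.exp ((Real.pi * Complex.I / p) *
          (-((α + (j : ℂ)) * (β + (i : ℂ))) / 2 + ((i : ℂ) + β) * (α / 2 - (a : ℂ))
            + ((j : ℂ) + α) * (β / 2 - (b : ℂ))))
      = (4 * p : ℂ) *
          Complex.exp ((Real.pi * Complex.I / (2 * p)) *
            ((α - 2 * (a : ℂ)) * (β - 2 * (b : ℂ)))) :=
  cartan_diagonal_action_general p α β a b
end
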